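/- Let A, B be nonempty finite sets of vectors in {0,1}^d. There exist a ∈ A and b ∈ B with integer inner product ⟨a, b⟩ = 0 if and only if the minimum over a ∈ A, b ∈ B of the Hamming distance ‖f_A(a) − f_B(b)‖_0 equals 2d. This is the correctness of the fine-grained reduction from Orthogonal Vectors to the Bichromatic Closest Pair problem in the Hamming metric. -/

import Mathlib

/-- The coding map `g_A : {0,1} → {0,1}^5`, with
`g_A 0 = (1,1,0,0,0)` and `g_A 1 = (0,0,1,1,0)`. -/
def gA : Fin 2 → Fin 5 → Fin 2 := ![![1, 1, 0, 0, 0], ![0, 0, 1, 1, 0]]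

/-- The coding map `g_B : {0,1} → {0,1}^5`, with
`g_B 0 = (1,0,1,0,0)` and `g_B 1 = (0,1,0,0,1)`. -/
def gB : Fin 2 → Fin 5 → Fin 2 := ![![1, 0, 1, 0, 0], ![0, 1, 0, 0, 1]]

/-- `f_A(a) ∈ {0,1}^{5d}` is the concatenation of the blocks
`g_A(a_1), …, g_A(a_d)` (coordinates indexed by `Fin d × Fin 5`). -/
def fA (d : ℕ) (a : Fin d → Fin 2) : Fin d × Fin 5 → Fin 2 :=
  fun p => gA (a p.1) p.2

/-- `f_B(b) ∈ {0,1}^{5d}` is the concatenation of the blocks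
`g_B(b_1), …, g_B(b_d)`. -/
def fB (d : ℕ) (b : Fin d → Fin 2) : Fin d × Fin 5 → Fin 2 :=
  fun p => gB (b p.1) p.2

/-!
Each block contributes `‖g_A(x) − g_B(y)‖₀ = 2 + 2xy`, so
`‖f_A(a) − f_B(b)‖₀ = 2d + 2⟨a, b⟩ ≥ 2d`, with equality exactly for orthogonal pairs.
-/

theorem Finset.inf'_eq_iff_exists_eq_of_le {ι α : Type*} [LinearOrder α] {s : Finset ι}
    (hs : s.Nonempty) {f : ι → α} {c : α} (hc : ∀ i ∈ s, c ≤ f i) :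
    s.inf' hs f = c ↔ ∃ i ∈ s, f i = c := by
  constructor
  · intro h
    obtain ⟨i, hi, hfi⟩ := s.exists_mem_eq_inf' hs f
    exact ⟨i, hi, hfi ▸ h⟩
  · rintro ⟨i, hi, rfl⟩
    exact le_antisymm (s.inf'_le f hi) (Finset.le_inf' hs f hc)

theorem hammingDist_eq_sum_hammingDist_curry {ι κ β : Type*} [Fintype ι] [Fintype κ]
    [DecidableEq β] (x y : ι × κ → β) :
    hammingDist x y = ∑ i, hammingDist (fun k => x (i, k)) (fun k => y (i, k)) := by
  simp only [hammingDist, Finset.card_filter, Fintype.sum_prod_type]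

theorem hammingDist_gA_gB (x y : Fin 2) : hammingDist (gA x) (gB y) = 2 + 2 * (x.val * y.val) := by
  decide +revert

theorem hammingDist_fA_fB (d : ℕ) (a b : Fin d → Fin 2) :
    hammingDist (fA d a) (fB d b) = 2 * d + 2 * ∑ j, (a j).val * (b j).val := by
  simp only [hammingDist_eq_sum_hammingDist_curry, fA, fB, hammingDist_gA_gB,
    Finset.sum_add_distrib, Finset.mul_sum]
  simp [mul_comm]

/-- Correctness of the fine-grained reduction from Orthogonal Vectors to the
Bichromatic Closest Pair problem in the Hamming metric: for nonempty finite
sets `A, B ⊆ {0,1}^d`, there exist `a ∈ A`, `b ∈ B` with integer inner product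
`⟨a,b⟩ = 0` iff the minimum over `a ∈ A`, `b ∈ B` of the Hamming distance
`‖f_A(a) − f_B(b)‖₀` equals `2d`. -/
theorem ov_iff_bichromatic_min_hammingDist_eq
    (d : ℕ) (A B : Finset (Fin d → Fin 2)) (hA : A.Nonempty) (hB : B.Nonempty) :
    (∃ a ∈ A, ∃ b ∈ B, ∑ j, ((a j).val : ℤ) * ((b j).val : ℤ) = 0)
      ↔ (A ×ˢ B).inf' (hA.product hB)
          (fun p => hammingDist (fA d p.1) (fB d p.2)) = 2 * d := by
  rw [Finset.inf'_eq_iff_exists_eq_of_le _ fun p _ => by rw [hammingDist_fA_fB]; omega]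
  have horth (a b : Fin d → Fin 2) :
      ∑ j, ((a j).val : ℤ) * ((b j).val : ℤ) = 0 ↔ hammingDist (fA d a) (fB d b) = 2 * d := by
    rw [hammingDist_fA_fB, ← Nat.cast_inj (R := ℤ)]
    push_cast
    omega
  simp only [horth, Finset.mem_product, Prod.exists, and_assoc, exists_and_left]
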